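/- arXiv:1508.05217 — 2 statements merged into one kernel-verified Lean document; each statement's English description precedes it below -/
import Mathlib

section
/- Define the finite-horizon value recursion P(N) = Q, P(k) = M + Σ_i π_i A_i' P(k+1) A_i − Ā' P(k+1) B (R + B' P(k+1) B)⁻¹ B' P(k+1) Ā for k = N−1,…,0, with Q, M symmetric PSD and R symmetric PD. Then every P(k) is symmetric positive semidefinite. -/
/-!
Stack the gain and the mode matrices as `Cᵢ = [B Aᵢ]`. Averaging the Gram matrices `Cᵢᵀ P Cᵢ` over
`π` and adding `R` to the top-left corner gives a positive semidefinite block matrix whose top-left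
block is `R + BᵀPB` (this is where `∑ πᵢ = 1` enters) and whose Schur complement is
`∑ πᵢ AᵢᵀPAᵢ − ĀᵀPB (R + BᵀPB)⁻¹ BᵀPĀ`. Hence one Riccati step preserves positive
semidefiniteness, and backward induction from `P(N) = Q` concludes.
-/

open Matrix

namespace Matrix

variable {n m k ι α : Type*}

lemma transpose_fromCols_mul_mul_fromCols [Fintype n] [CommSemiring α] (P : Matrix n n α)
    (B : Matrix n m α) (A : Matrix n k α) :
    (fromCols B A)ᵀ * P * fromCols B A =
      fromBlocks (Bᵀ * P * B) (Bᵀ * P * A) (Aᵀ * P * B) (Aᵀ * P * A) := by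
  rw [transpose_fromCols, fromRows_mul, fromRows_mul_fromCols]

lemma sum_fromBlocks [AddCommMonoid α] (s : Finset ι) (a : ι → Matrix m m α)
    (b : ι → Matrix m k α) (c : ι → Matrix k m α) (d : ι → Matrix k k α) :
    ∑ i ∈ s, fromBlocks (a i) (b i) (c i) (d i) =
      fromBlocks (∑ i ∈ s, a i) (∑ i ∈ s, b i) (∑ i ∈ s, c i) (∑ i ∈ s, d i) := by
  ext (i | i) (j | j) <;> simp [sum_apply]

lemma PosSemidef.transpose_mul_mul_same [Fintype n] [Fintype m] {P : Matrix n n ℝ}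
    (hP : P.PosSemidef) (C : Matrix n m ℝ) : (Cᵀ * P * C).PosSemidef := by
  simpa only [conjTranspose_eq_transpose_of_trivial] using hP.conjTranspose_mul_mul_same C

lemma PosSemidef.fromBlocks_zero [Fintype m] [Fintype k] [DecidableEq m] {R : Matrix m m ℝ}
    (hR : R.PosSemidef) :
    (fromBlocks R 0 0 0 : Matrix (m ⊕ k) (m ⊕ k) ℝ).PosSemidef := by
  have h := hR.transpose_mul_mul_same (fromCols (1 : Matrix m m ℝ) (0 : Matrix m k ℝ))
  rw [transpose_fromCols_mul_mul_fromCols] at h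
  simpa using h

end Matrix

section Riccati

variable {n m k ι : Type*} [Fintype n] [Fintype m] [Fintype k] [Fintype ι] [DecidableEq m]

noncomputable def riccatiStep (π : ι → ℝ) (A : ι → Matrix n k ℝ) (B : Matrix n m ℝ)
    (M : Matrix k k ℝ) (R : Matrix m m ℝ) (P : Matrix n n ℝ) : Matrix k k ℝ :=
  M + (∑ i, π i • ((A i)ᵀ * P * A i)) -
    (∑ i, π i • A i)ᵀ * P * B * (R + Bᵀ * P * B)⁻¹ * Bᵀ * P * (∑ i, π i • A i)

lemma posSemidef_riccatiBlock {π : ι → ℝ} (hπ : ∀ i, 0 ≤ π i) (hsum : ∑ i, π i = 1)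
    (A : ι → Matrix n k ℝ) (B : Matrix n m ℝ) {R : Matrix m m ℝ} (hR : R.PosSemidef)
    {P : Matrix n n ℝ} (hP : P.PosSemidef) :
    (fromBlocks (R + Bᵀ * P * B) (Bᵀ * P * ∑ i, π i • A i) ((∑ i, π i • A i)ᵀ * P * B)
      (∑ i, π i • ((A i)ᵀ * P * A i))).PosSemidef := by
  have hblocks : fromBlocks (R + Bᵀ * P * B) (Bᵀ * P * ∑ i, π i • A i)
      ((∑ i, π i • A i)ᵀ * P * B) (∑ i, π i • ((A i)ᵀ * P * A i)) =
      fromBlocks R 0 0 0 + ∑ i, π i • ((fromCols B (A i))ᵀ * P * fromCols B (A i)) := by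
    simp only [transpose_fromCols_mul_mul_fromCols, fromBlocks_smul, sum_fromBlocks,
      fromBlocks_add, ← Finset.sum_smul, hsum, one_smul, zero_add, transpose_sum,
      transpose_smul, Matrix.mul_sum, Matrix.sum_mul, Matrix.mul_smul, Matrix.smul_mul]
  rw [hblocks]
  exact hR.fromBlocks_zero.add <| posSemidef_sum _ fun i _ ↦
    (hP.transpose_mul_mul_same _).smul (hπ i)

theorem posSemidef_riccatiStep {π : ι → ℝ} (hπ : ∀ i, 0 ≤ π i) (hsum : ∑ i, π i = 1)
    (A : ι → Matrix n k ℝ) (B : Matrix n m ℝ) {M : Matrix k k ℝ} {R : Matrix m m ℝ}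
    (hM : M.PosSemidef) (hR : R.PosDef) {P : Matrix n n ℝ} (hP : P.PosSemidef) :
    (riccatiStep π A B M R P).PosSemidef := by
  have hS : (R + Bᵀ * P * B).PosDef := hR.add_posSemidef (hP.transpose_mul_mul_same B)
  have : Invertible (R + Bᵀ * P * B) := hS.isUnit.invertible
  have hPsymm : Pᵀ = P := (isHermitian_iff_isSymm.mp hP.isHermitian).eq
  have hadj : (Bᵀ * P * ∑ i, π i • A i)ᴴ = (∑ i, π i • A i)ᵀ * P * B := by
    rw [conjTranspose_eq_transpose_of_trivial, transpose_mul, transpose_mul, transpose_transpose,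
      hPsymm, Matrix.mul_assoc]
  have hschur := (PosDef.fromBlocks₁₁ _ _ hS).mp
    (hadj ▸ posSemidef_riccatiBlock hπ hsum A B hR.posSemidef hP)
  rw [hadj] at hschur
  unfold riccatiStep
  simpa only [add_sub_assoc, Matrix.mul_assoc] using hM.add hschur

end Riccati

/-- Every matrix of the backward finite-horizon Riccati recursion
`P(N)=Q`, `P(k) = M + Σ_i π_i A_i'P(k+1)A_i − Ā'P(k+1)B(R+B'P(k+1)B)⁻¹B'P(k+1)Ā`
is symmetric positive semidefinite. -/
theorem stmt7 {n m q : ℕ} (π : Fin q → ℝ) (hπ : ∀ i, 0 ≤ π i) (hsum : ∑ i, π i = 1)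
    (A : Fin q → Matrix (Fin n) (Fin n) ℝ) (B : Matrix (Fin n) (Fin m) ℝ)
    (M Q : Matrix (Fin n) (Fin n) ℝ) (R : Matrix (Fin m) (Fin m) ℝ)
    (hM : M.PosSemidef) (hQ : Q.PosSemidef) (hR : R.PosDef)
    (N : ℕ) (Pm : ℕ → Matrix (Fin n) (Fin n) ℝ)
    (hPN : Pm N = Q)
    (hrec : ∀ k, k < N → Pm k = M + (∑ i, π i • ((A i)ᵀ * Pm (k+1) * A i)) -
      (∑ i, π i • A i)ᵀ * Pm (k+1) * B * (R + Bᵀ * Pm (k+1) * B)⁻¹ *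
        Bᵀ * Pm (k+1) * (∑ i, π i • A i)) :
    ∀ k, k ≤ N → (Pm k).PosSemidef := by
  intro k hk
  induction hk using Nat.decreasingInduction with
  | self => exact hPN ▸ hQ
  | of_succ k hk ih =>
    rw [hrec k hk]
    exact posSemidef_riccatiStep hπ hsum A B hM hR ih
end

section
/- In the dynamic programming step, the value function remains quadratic: if the cost-to-go at time k+1 is V_{k+1}(x) = x'P x with P symmetric PSD, and at time k the controller may additionally choose a discrete input a ∈ {1,…,p} selecting the input matrix B_a, then the optimal cost-to-go at time k is V_k(x) = min_{a ∈ {1,…,p}} x' P_a x, where P_a = M + Σ_i π_i A_i'PA_i − Ā'PB_a(R + B_a'PB_a)⁻¹B_a'PĀ; i.e., V_k is a pointwise minimum of finitely many PSD quadratic forms. -/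
open Matrix

/-! For a fixed discrete input `a`, the cost is a quadratic function of `u` whose Hessian
`R + B_aᵀPB_a` is positive definite (this is where `∑ π_i = 1` and the symmetry of `P` enter).
Completing the square writes it as `xᵀP_a x + (u - u*)ᵀ(R + B_aᵀPB_a)(u - u*)` with
`u* = -(R + B_aᵀPB_a)⁻¹B_aᵀPĀx`, so its least value over `u` is `xᵀP_a x`. The least value
over the pairs `(a, u)` is then the least of these finitely many values. -/

theorem Finset.isLeast_biUnion_inf' {ι α : Type*} [LinearOrder α] (s : Finset ι)
    (hs : s.Nonempty) {S : ι → Set α} {f : ι → α} (h : ∀ i ∈ s, IsLeast (S i) (f i)) :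
    IsLeast (⋃ i ∈ s, S i) (s.inf' hs f) := by
  obtain ⟨i, hi, hfi⟩ := s.exists_mem_eq_inf' hs f
  refine ⟨Set.mem_biUnion hi (hfi ▸ (h i hi).1), ?_⟩
  simp only [mem_lowerBounds, Set.mem_iUnion]
  rintro c ⟨j, hj, hc⟩
  exact (s.inf'_le f hj).trans ((h j hj).2 hc)

namespace Matrix

variable {ι n m α : Type*} [Fintype ι] [Fintype n] [Fintype m] [CommRing α]

lemma IsSymm.transpose_mul_mul_same {k : Type*} {P : Matrix n n α} (hP : P.IsSymm)
    (B : Matrix n k α) :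
    (Bᵀ * P * B).IsSymm := by
  simp only [IsSymm, transpose_mul, transpose_transpose, hP.eq, Matrix.mul_assoc]

lemma IsSymm.dotProduct_mulVec_comm {P : Matrix n n α} (hP : P.IsSymm) (y z : n → α) :
    y ⬝ᵥ (P *ᵥ z) = z ⬝ᵥ (P *ᵥ y) := by
  simpa only [hP.eq] using dotProduct_transpose_mulVec P y z

lemma add_dotProduct_mulVec_add {P : Matrix n n α} (hP : P.IsSymm) (y z : n → α) :
    (y + z) ⬝ᵥ (P *ᵥ (y + z)) =
      y ⬝ᵥ (P *ᵥ y) + 2 * (z ⬝ᵥ (P *ᵥ y)) + z ⬝ᵥ (P *ᵥ z) := by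
  rw [mulVec_add, dotProduct_add, add_dotProduct, add_dotProduct,
    hP.dotProduct_mulVec_comm y z]
  ring

lemma mulVec_dotProduct_mulVec {l : Type*} [Fintype l] (N : Matrix n m α) (L : Matrix n l α)
    (y : m → α) (z : l → α) :
    (N *ᵥ y) ⬝ᵥ (L *ᵥ z) = y ⬝ᵥ ((Nᵀ * L) *ᵥ z) := by
  rw [← mulVec_mulVec, ← dotProduct_transpose_mulVec Nᵀ, transpose_transpose, dotProduct_comm]

lemma dotProduct_sum_smul_mulVec {l : Type*} [Fintype l] (c : ι → α) (N : ι → Matrix m l α)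
    (y : m → α) (z : l → α) :
    y ⬝ᵥ ((∑ i, c i • N i) *ᵥ z) = ∑ i, c i * (y ⬝ᵥ (N i *ᵥ z)) := by
  simp only [sum_mulVec, smul_mulVec, dotProduct_sum, dotProduct_smul, smul_eq_mul]

variable [DecidableEq m]

lemma dotProduct_mulVec_add_two_mul_dotProduct {S : Matrix m m α} (hS : S.IsSymm)
    (hdet : IsUnit S.det) (k u : m → α) :
    u ⬝ᵥ (S *ᵥ u) + 2 * (u ⬝ᵥ k) =
      (u + S⁻¹ *ᵥ k) ⬝ᵥ (S *ᵥ (u + S⁻¹ *ᵥ k)) - k ⬝ᵥ (S⁻¹ *ᵥ k) := by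
  have hk : S *ᵥ (S⁻¹ *ᵥ k) = k := by rw [mulVec_mulVec, mul_nonsing_inv S hdet, one_mulVec]
  rw [add_dotProduct_mulVec_add hS, hS.dotProduct_mulVec_comm (S⁻¹ *ᵥ k), hk,
    dotProduct_comm (S⁻¹ *ᵥ k) k]
  ring

end Matrix

section JumpLQ

variable {ι n m α : Type*} [Fintype ι] [Fintype n] [Fintype m] [CommRing α]
  (π : ι → α) (A : ι → Matrix n n α) (M P : Matrix n n α) (R : Matrix m m α)
  (B : Matrix n m α)

def jumpLQCost (x : n → α) (u : m → α) : α :=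
  x ⬝ᵥ (M *ᵥ x) + u ⬝ᵥ (R *ᵥ u) +
    ∑ i, π i * ((A i *ᵥ x + B *ᵥ u) ⬝ᵥ (P *ᵥ (A i *ᵥ x + B *ᵥ u)))

noncomputable def jumpRiccati [DecidableEq m] : Matrix n n α :=
  M + (∑ i, π i • ((A i)ᵀ * P * A i)) -
    (∑ i, π i • A i)ᵀ * P * B * (R + Bᵀ * P * B)⁻¹ * Bᵀ * P * (∑ i, π i • A i)

variable {π P R}

lemma sum_mul_dotProduct_mulVec_add (hπ : ∑ i, π i = 1) (hP : P.IsSymm) (x : n → α)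
    (u : m → α) :
    ∑ i, π i * ((A i *ᵥ x + B *ᵥ u) ⬝ᵥ (P *ᵥ (A i *ᵥ x + B *ᵥ u))) =
      x ⬝ᵥ ((∑ i, π i • ((A i)ᵀ * P * A i)) *ᵥ x) +
        2 * (u ⬝ᵥ ((Bᵀ * P * ∑ i, π i • A i) *ᵥ x)) +
          u ⬝ᵥ ((Bᵀ * P * B) *ᵥ u) := by
  have hterm : ∀ i, (A i *ᵥ x + B *ᵥ u) ⬝ᵥ (P *ᵥ (A i *ᵥ x + B *ᵥ u)) =
      x ⬝ᵥ (((A i)ᵀ * P * A i) *ᵥ x) + 2 * (u ⬝ᵥ ((Bᵀ * P * A i) *ᵥ x)) +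
        u ⬝ᵥ ((Bᵀ * P * B) *ᵥ u) := fun i => by
    simp only [add_dotProduct_mulVec_add hP, mulVec_mulVec, mulVec_dotProduct_mulVec,
      Matrix.mul_assoc]
  simp only [Matrix.mul_sum, Matrix.mul_smul, dotProduct_sum_smul_mulVec]
  rw [← one_mul (u ⬝ᵥ _), ← hπ, Finset.mul_sum, Finset.sum_mul, ← Finset.sum_add_distrib,
    ← Finset.sum_add_distrib]
  refine Finset.sum_congr rfl fun i _ => ?_
  rw [hterm]
  ring

variable [DecidableEq m]

theorem jumpLQCost_eq (hπ : ∑ i, π i = 1) (hP : P.IsSymm) (hR : R.IsSymm)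
    (hS : IsUnit (R + Bᵀ * P * B).det) (x : n → α) (u : m → α) :
    jumpLQCost π A M P R B x u = x ⬝ᵥ (jumpRiccati π A M P R B *ᵥ x) +
      (u + (R + Bᵀ * P * B)⁻¹ *ᵥ ((Bᵀ * P * ∑ i, π i • A i) *ᵥ x)) ⬝ᵥ
        ((R + Bᵀ * P * B) *ᵥ
          (u + (R + Bᵀ * P * B)⁻¹ *ᵥ ((Bᵀ * P * ∑ i, π i • A i) *ᵥ x))) := by
  set Ā := ∑ i, π i • A i
  set S := R + Bᵀ * P * B
  set K := Bᵀ * P * Ā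
  have hgain : x ⬝ᵥ ((Āᵀ * P * B * S⁻¹ * Bᵀ * P * Ā) *ᵥ x) =
      (K *ᵥ x) ⬝ᵥ (S⁻¹ *ᵥ (K *ᵥ x)) := by
    rw [mulVec_mulVec, mulVec_dotProduct_mulVec]
    simp only [K, transpose_mul, transpose_transpose, hP.eq, Matrix.mul_assoc]
  have hsq := dotProduct_mulVec_add_two_mul_dotProduct (hR.add (hP.transpose_mul_mul_same B)) hS
    (K *ᵥ x) u
  unfold jumpLQCost jumpRiccati
  rw [sum_mul_dotProduct_mulVec_add A B hπ hP, sub_mulVec, add_mulVec, dotProduct_sub,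
    dotProduct_add, hgain]
  rw [show S *ᵥ u = R *ᵥ u + (Bᵀ * P * B) *ᵥ u from add_mulVec _ _ _, dotProduct_add] at hsq
  linear_combination hsq

end JumpLQ

theorem isLeast_range_jumpLQCost {ι n m : Type*} [Fintype ι] [Fintype n] [Fintype m]
    [DecidableEq m] {π : ι → ℝ} (A : ι → Matrix n n ℝ) (M : Matrix n n ℝ) {P : Matrix n n ℝ}
    {R : Matrix m m ℝ} (B : Matrix n m ℝ) (hπ : ∑ i, π i = 1) (hP : P.PosSemidef)
    (hR : R.PosDef) (x : n → ℝ) :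
    IsLeast (Set.range (jumpLQCost π A M P R B x))
      (x ⬝ᵥ (jumpRiccati π A M P R B *ᵥ x)) := by
  have hS : (R + Bᵀ * P * B).PosDef :=
    hR.add_posSemidef (by simpa using hP.conjTranspose_mul_mul_same B)
  have hcost := jumpLQCost_eq A M B hπ (isHermitian_iff_isSymm.1 hP.1)
    (isHermitian_iff_isSymm.1 hR.1) hS.det_pos.ne'.isUnit x
  refine ⟨⟨-((R + Bᵀ * P * B)⁻¹ *ᵥ ((Bᵀ * P * ∑ i, π i • A i) *ᵥ x)), by simp [hcost]⟩, ?_⟩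
  have hS_nonneg (v : m → ℝ) : 0 ≤ v ⬝ᵥ ((R + Bᵀ * P * B) *ᵥ v) := by
    simpa only [star_trivial] using hS.posSemidef.dotProduct_mulVec_nonneg v
  rintro _ ⟨u, rfl⟩
  exact (hcost u).symm ▸ le_add_of_nonneg_right (hS_nonneg _)

theorem stmt9_general {n m q p : ℕ} [NeZero p]
    (π : Fin q → ℝ) (hsum : ∑ i, π i = 1)
    (A : Fin q → Matrix (Fin n) (Fin n) ℝ) (Bm : Fin p → Matrix (Fin n) (Fin m) ℝ)
    (M P : Matrix (Fin n) (Fin n) ℝ) (R : Matrix (Fin m) (Fin m) ℝ)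
    (hP : P.PosSemidef) (hR : R.PosDef)
    (Pa : Fin p → Matrix (Fin n) (Fin n) ℝ)
    (hPa : ∀ a, Pa a = M + (∑ i, π i • ((A i)ᵀ * P * A i)) -
      (∑ i, π i • A i)ᵀ * P * Bm a * (R + (Bm a)ᵀ * P * Bm a)⁻¹ *
        (Bm a)ᵀ * P * (∑ i, π i • A i))
    (x : Fin n → ℝ) :
    IsLeast {c : ℝ | ∃ (a : Fin p) (u : Fin m → ℝ),
        c = x ⬝ᵥ (M *ᵥ x) + u ⬝ᵥ (R *ᵥ u) +
          ∑ i, π i * ((A i *ᵥ x + Bm a *ᵥ u) ⬝ᵥ (P *ᵥ (A i *ᵥ x + Bm a *ᵥ u)))}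
      (Finset.univ.inf' Finset.univ_nonempty (fun a => x ⬝ᵥ (Pa a *ᵥ x))) := by
  obtain rfl : Pa = fun a => jumpRiccati π A M P R (Bm a) := funext hPa
  convert Finset.univ.isLeast_biUnion_inf' Finset.univ_nonempty
    fun a _ => isLeast_range_jumpLQCost A M (Bm a) hsum hP hR x using 1
  · rfl -- the `LE ℝ` instances of the two sides agree only up to unfolding
  · ext c
    simp [jumpLQCost, eq_comm]

/-- With an additional discrete input `a` selecting `B_a`, the optimal cost-to-go
remains a pointwise minimum of finitely many PSD quadratic forms:
`min_{a,u} [x'Mx + u'Ru + E[(A_σ x + B_a u)'P(A_σ x + B_a u)]] = min_a x'P_a x`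
where `P_a = M + Σ_i π_i A_i'PA_i − Ā'PB_a(R + B_a'PB_a)⁻¹B_a'PĀ`. -/
theorem stmt9 {n m q p : ℕ} [NeZero p]
    (π : Fin q → ℝ) (hπ : ∀ i, 0 ≤ π i) (hsum : ∑ i, π i = 1)
    (A : Fin q → Matrix (Fin n) (Fin n) ℝ) (Bm : Fin p → Matrix (Fin n) (Fin m) ℝ)
    (M P : Matrix (Fin n) (Fin n) ℝ) (R : Matrix (Fin m) (Fin m) ℝ)
    (hM : M.PosSemidef) (hP : P.PosSemidef) (hR : R.PosDef)
    (Pa : Fin p → Matrix (Fin n) (Fin n) ℝ)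
    (hPa : ∀ a, Pa a = M + (∑ i, π i • ((A i)ᵀ * P * A i)) -
      (∑ i, π i • A i)ᵀ * P * Bm a * (R + (Bm a)ᵀ * P * Bm a)⁻¹ *
        (Bm a)ᵀ * P * (∑ i, π i • A i))
    (x : Fin n → ℝ) :
    IsLeast {c : ℝ | ∃ (a : Fin p) (u : Fin m → ℝ),
        c = x ⬝ᵥ (M *ᵥ x) + u ⬝ᵥ (R *ᵥ u) +
          ∑ i, π i * ((A i *ᵥ x + Bm a *ᵥ u) ⬝ᵥ (P *ᵥ (A i *ᵥ x + Bm a *ᵥ u)))}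
      (Finset.univ.inf' Finset.univ_nonempty (fun a => x ⬝ᵥ (Pa a *ᵥ x))) :=
  stmt9_general π hsum A Bm M P R hP hR Pa hPa x
end
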